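/- arXiv:1707.08744 — 2 statements merged into one kernel-verified Lean document; each statement's English description precedes it below -/
import Mathlib

section
/- Failure of the Sure Thing Principle on conditional neighbourhood models: there exist a conditional neighbourhood model M (with a single agent a), a world w of M, and propositional letters p, q such that M,w ⊨ B_a(p,q), M,w ⊨ B_a(¬p,q), and M,w ⊨ B_a(⊤,¬q); in particular the formula B_a(p,q) ∧ B_a(¬p,q) → B_a(⊤,q) is not valid on conditional neighbourhood models. -/
/-- The knowledge cell of agent `a` at world `w`, derived from the
conditional neighbourhood function `N`:
`[w]_a = {v | ∀ X ⊆ W, N_a^w(X) = N_a^v(X)}`. -/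
def cellOf {Agt W : Type} (N : Agt → W → Set W → Set (Set W)) (a : Agt) (w : W) : Set W :=
  {v | ∀ X : Set W, N a w X = N a v X}

/-- A conditional neighbourhood model `(W, N, V)`. -/
structure CNModel (Agt Prp W : Type) : Type where
  nonempty : Nonempty W
  N : Agt → W → Set W → Set (Set W)
  V : Prp → Set W
  cond_c : ∀ a w X, ∀ Y ∈ N a w X, Y ⊆ X ∩ cellOf N a w
  cond_ec : ∀ a w (X Y : Set W), X ∩ cellOf N a w = Y ∩ cellOf N a w → N a w X = N a w Y
  cond_d : ∀ a w X, ∀ Y ∈ N a w X, (X ∩ cellOf N a w) \ Y ∉ N a w X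
  cond_sc : ∀ a w (X Y Z : Set W), Y ⊆ X ∩ cellOf N a w → Z ⊆ X ∩ cellOf N a w →
      (X ∩ cellOf N a w) \ Y ∉ N a w X → Y ⊂ Z → Z ∈ N a w X

/-- The language L_CN: `φ ::= ⊤ | p | ¬φ | (φ∧φ) | B_a(φ,φ)`. -/
inductive CNForm (Agt Prp : Type) : Type
  | top : CNForm Agt Prp
  | atom : Prp → CNForm Agt Prp
  | neg : CNForm Agt Prp → CNForm Agt Prp
  | and : CNForm Agt Prp → CNForm Agt Prp → CNForm Agt Prp
  | bel : Agt → CNForm Agt Prp → CNForm Agt Prp → CNForm Agt Prp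

/-- Truth of an L_CN formula at a world of a conditional neighbourhood model.
`B_a(φ,ψ)` holds at `w` iff some `Y ∈ N_a^w(⟦φ⟧)` satisfies `Y ⊆ ⟦ψ⟧`. -/
def CNModel.truth {Agt Prp W : Type} (M : CNModel Agt Prp W) : CNForm Agt Prp → W → Prop
  | .top, _ => True
  | .atom p, w => w ∈ M.V p
  | .neg φ, w => ¬ M.truth φ w
  | .and φ ψ, w => M.truth φ w ∧ M.truth ψ w
  | .bel a φ ψ, w => ∃ Y ∈ M.N a w {v | M.truth φ v}, Y ⊆ {v | M.truth ψ v}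

/-- Material implication in L_CN: `φ → ψ := ¬(φ ∧ ¬ψ)`. -/
def CNForm.imp {Agt Prp : Type} (φ ψ : CNForm Agt Prp) : CNForm Agt Prp :=
  .neg (.and φ (.neg ψ))

/-! A choice function `sel` on the sets of worlds yields a conditional neighbourhood model
with a single knowledge cell, `N_a^w(X) = {Y ⊆ X | sel X ∈ Y}`, in which `B_a(φ,ψ)` holds
iff the world chosen from `⟦φ⟧` satisfies `φ ∧ ψ`. Nothing forces the choices on different
sets to cohere: choose a `q`-world from `⟦p⟧` and from `⟦¬p⟧`, but a `¬q`-world from the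
whole space. -/

theorem cellOf_const {Agt W : Type} (f : Set W → Set (Set W)) (a : Agt) (w : W) :
    cellOf (fun _ _ => f) a w = Set.univ :=
  Set.eq_univ_of_forall fun _ _ => rfl

namespace CNModel

variable {Agt Prp W : Type}

def ofSelection [h : Nonempty W] (V : Prp → Set W) (sel : Set W → W)
    (hsel : ∀ X : Set W, X.Nonempty → sel X ∈ X) : CNModel Agt Prp W where
  nonempty := h
  N _ _ X := {Y | Y ⊆ X ∧ sel X ∈ Y}
  V := V
  cond_c _ _ _ _ hY := by
    rw [cellOf_const, Set.inter_univ]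
    exact hY.1
  cond_ec _ _ X Y hXY := by
    rw [cellOf_const, Set.inter_univ, Set.inter_univ] at hXY
    rw [hXY]
  cond_d _ _ _ _ hY hdiff := by
    rw [cellOf_const, Set.inter_univ] at hdiff
    exact hdiff.2.2 hY.2
  cond_sc _ _ X Y Z _ hZ hdiff hYZ := by
    rw [cellOf_const, Set.inter_univ] at hZ hdiff
    obtain ⟨z, hzZ, -⟩ := Set.exists_of_ssubset hYZ
    have hselX : sel X ∈ X := hsel X ⟨z, hZ hzZ⟩
    have hselY : sel X ∈ Y := by
      by_contra hselY
      exact hdiff ⟨Set.sdiff_subset, hselX, hselY⟩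
    exact ⟨hZ, hYZ.1 hselY⟩

theorem setOf_truth_top (M : CNModel Agt Prp W) : {v | M.truth .top v} = Set.univ := rfl

theorem setOf_truth_neg (M : CNModel Agt Prp W) (φ : CNForm Agt Prp) :
    {v | M.truth (.neg φ) v} = {v | M.truth φ v}ᶜ := rfl

theorem truth_bel_ofSelection [Nonempty W] (V : Prp → Set W) (sel : Set W → W)
    (hsel : ∀ X : Set W, X.Nonempty → sel X ∈ X) (a : Agt) (φ ψ : CNForm Agt Prp) (w : W) :
    (ofSelection V sel hsel).truth (.bel a φ ψ) w ↔
      sel {v | (ofSelection V sel hsel).truth φ v} ∈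
        {v | (ofSelection V sel hsel).truth φ v} ∩
          {v | (ofSelection V sel hsel).truth ψ v} := by
  constructor
  · rintro ⟨Y, ⟨hYφ, hselY⟩, hYψ⟩
    exact ⟨hYφ hselY, hYψ hselY⟩
  · rintro ⟨hselφ, hselψ⟩
    exact ⟨{sel _}, ⟨Set.singleton_subset_iff.2 hselφ, rfl⟩,
      Set.singleton_subset_iff.2 hselψ⟩

end CNModel

theorem exists_choice_univ_eq_and_mem_inter_of_ne_univ {W : Type} (Q : Set W) (w₀ : W) :
    ∃ sel : Set W → W, (∀ X : Set W, X.Nonempty → sel X ∈ X) ∧ sel Set.univ = w₀ ∧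
      ∀ X ≠ Set.univ, ∀ x ∈ X ∩ Q, sel X ∈ X ∩ Q := by
  classical
  refine ⟨fun X => if X = Set.univ then w₀ else if hQ : (X ∩ Q).Nonempty then hQ.some
      else if hX : X.Nonempty then hX.some else w₀,
    fun X hX => ?_, if_pos rfl, fun X hX x hx => ?_⟩
  · by_cases hXuniv : X = Set.univ
    · simp only [hXuniv, if_true, Set.mem_univ]
    · dsimp only
      rw [if_neg hXuniv]
      split_ifs with hQ
      exacts [hQ.some_mem.1, hX.some_mem]
  · dsimp only
    rw [if_neg hX, dif_pos ⟨x, hx⟩]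
    exact Set.Nonempty.some_mem _

/-- Failure of the Sure Thing Principle on conditional neighbourhood models:
there are a conditional neighbourhood model, a world `w` and distinct letters
`p`, `q` with `M,w ⊨ B_a(p,q)`, `M,w ⊨ B_a(¬p,q)` and `M,w ⊨ B_a(⊤,¬q)`;
in particular `B_a(p,q) ∧ B_a(¬p,q) → B_a(⊤,q)` fails at `w`, so it is not
valid on conditional neighbourhood models. -/
theorem sure_thing_fails {Agt Prp : Type} (a : Agt) (p q : Prp) (hpq : p ≠ q) :
    ∃ (W : Type) (M : CNModel Agt Prp W) (w : W),
      M.truth (.bel a (.atom p) (.atom q)) w ∧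
      M.truth (.bel a (.neg (.atom p)) (.atom q)) w ∧
      M.truth (.bel a .top (.neg (.atom q))) w ∧
      ¬ M.truth
          (CNForm.imp (.and (.bel a (.atom p) (.atom q)) (.bel a (.neg (.atom p)) (.atom q)))
            (.bel a .top (.atom q))) w := by
  classical
  let V : Prp → Set (Bool × Bool) := fun r => {w | if r = p then w.1 else w.2}
  obtain ⟨sel, hsel, hsel_univ, hsel_Q⟩ :=
    exists_choice_univ_eq_and_mem_inter_of_ne_univ {w : Bool × Bool | w.2} (true, false)
  let M : CNModel Agt Prp (Bool × Bool) := .ofSelection V sel hsel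
  have hp : {v | M.truth (.atom p) v} = {w | w.1} := by
    ext
    simp [M, V, CNModel.ofSelection, CNModel.truth]
  have hq : {v | M.truth (.atom q) v} = {w | w.2} := by
    ext
    simp [M, V, CNModel.ofSelection, CNModel.truth, hpq.symm]
  have hbel_p : M.truth (.bel a (.atom p) (.atom q)) (true, true) := by
    rw [CNModel.truth_bel_ofSelection, hp, hq]
    exact hsel_Q _ ((Set.ne_univ_iff_exists_notMem _).2 ⟨(false, true), by simp⟩) (true, true)
      (by simp)
  have hbel_not_p : M.truth (.bel a (.neg (.atom p)) (.atom q)) (true, true) := by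
    rw [CNModel.truth_bel_ofSelection, CNModel.setOf_truth_neg, hp, hq]
    exact hsel_Q _ ((Set.ne_univ_iff_exists_notMem _).2 ⟨(true, true), by simp⟩) (false, true)
      (by simp)
  have hbel_top (ψ : CNForm Agt Prp) :
      M.truth (.bel a .top ψ) (true, true) ↔ (true, false) ∈ {v | M.truth ψ v} := by
    rw [CNModel.truth_bel_ofSelection, CNModel.setOf_truth_top, hsel_univ, Set.univ_inter]
  refine ⟨Bool × Bool, M, (true, true), hbel_p, hbel_not_p, ?_, fun himp => himp ?_⟩
  · rw [hbel_top, CNModel.setOf_truth_neg, hq]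
    simp
  · refine ⟨⟨hbel_p, hbel_not_p⟩, fun hbel_q => ?_⟩
    rw [hbel_top, hq] at hbel_q
    simp at hbel_q
end

section
/- Comparison determinacy: for every conditional neighbourhood model M, world w, agent a, and L_CN formulas α, β, the formula B_a(α↔¬β, α) → ¬B_a(α↔¬β, β) is true at w; i.e. writing α ≻_a β for B_a(α↔¬β, α), the formula (α ≻_a β) → ¬(β ≻_a α) is valid on conditional neighbourhood models. -/
/-- Biconditional in L_CN. -/
def CNForm.iff {Agt Prp : Type} (φ ψ : CNForm Agt Prp) : CNForm Agt Prp :=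
  .and (φ.imp ψ) (ψ.imp φ)

namespace CNModel

variable {Agt Prp W : Type} (M : CNModel Agt Prp W)

/-- If `Y, Z ∈ N_a^w(X)` were disjoint, `Z` would lie in the complement `D \ Y` of `Y` in
`D = X ∩ [w]_a`; that complement is excluded by (d), yet it is `Z` itself or, by (sc) applied
to `Z`, a member of `N_a^w(X)`. -/
theorem not_disjoint_of_mem_N {a : Agt} {w : W} {X Y Z : Set W}
    (hY : Y ∈ M.N a w X) (hZ : Z ∈ M.N a w X) : ¬ Disjoint Y Z := by
  intro hYZ
  set D := X ∩ cellOf M.N a w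
  have hZD : Z ⊆ D := M.cond_c a w X Z hZ
  have hZ_compl : Z ⊆ D \ Y := Set.subset_sdiff.2 ⟨hZD, hYZ.symm⟩
  apply M.cond_d a w X Y hY
  rcases hZ_compl.ssubset_or_eq with hss | rfl
  · exact M.cond_sc a w X Z (D \ Y) hZD Set.sdiff_subset (M.cond_d a w X Z hZ) hss
  · exact hZ

theorem truth_iff_neg {φ ψ : CNForm Agt Prp} {v : W} :
    M.truth (φ.iff (.neg ψ)) v ↔ (M.truth φ v ↔ ¬ M.truth ψ v) := by
  simp only [CNForm.iff, CNForm.imp, truth]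
  tauto

end CNModel

/-- Comparison determinacy: writing `α ≻_a β` for `B_a(α↔¬β, α)`,
`(α ≻_a β) → ¬(β ≻_a α)` is valid on conditional neighbourhood models. -/
theorem cn_comparison_determinacy {Agt Prp W : Type} (M : CNModel Agt Prp W)
    (w : W) (a : Agt) (α β : CNForm Agt Prp)
    (h : M.truth (.bel a (α.iff (.neg β)) α) w) :
    ¬ M.truth (.bel a (α.iff (.neg β)) β) w := by
  rintro ⟨Z, hZN, hZβ⟩
  obtain ⟨Y, hYN, hYα⟩ := h
  refine M.not_disjoint_of_mem_N hYN hZN (Set.disjoint_left.2 fun v hvY hvZ => ?_)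
  have hv_iff : M.truth α v ↔ ¬ M.truth β v :=
    M.truth_iff_neg.1 (M.cond_c a w _ Y hYN hvY).1
  exact hv_iff.1 (hYα hvY) (hZβ hvZ)
end
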